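/- arXiv:1412.5901 — 9 statements merged into one kernel-verified Lean document; each statement's English description precedes it below -/
import Mathlib

section
/- Let θ be a real number with sin θ ≠ 0, and let A be a 2×2 real matrix satisfying H_{-θ} * A = A * H_θ. Then det A ≤ 0, and moreover det A = 0 if and only if A = 0. -/
open Matrix

/-- The 2×2 real rotation matrix by angle `α`. -/
noncomputable def Hrot (α : ℝ) : Matrix (Fin 2) (Fin 2) ℝ :=
  !![Real.cos α, -Real.sin α; Real.sin α, Real.cos α]

theorem stmt_1 (θ : ℝ) (hθ : Real.sin θ ≠ 0)
    (A : Matrix (Fin 2) (Fin 2) ℝ)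
    (hA : Hrot (-θ) * A = A * Hrot θ) :
    A.det ≤ 0 ∧ (A.det = 0 ↔ A = 0) := by
  have h00 := congrFun (congrFun hA 0) 0
  have h01 := congrFun (congrFun hA 0) 1
  simp [Hrot, Matrix.mul_apply, Fin.sum_univ_two, Real.cos_neg, Real.sin_neg] at h00 h01
  -- h00 : cos θ * A 0 0 + sin θ * A 1 0 = A 0 0 * cos θ + A 0 1 * sin θ
  have hc : A 1 0 = A 0 1 := by
    have := mul_left_cancel₀ hθ (by nlinarith [h00] : Real.sin θ * A 1 0 = Real.sin θ * A 0 1)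
    exact this
  have hd : A 1 1 = -A 0 0 := by
    have := mul_left_cancel₀ hθ (by nlinarith [h01] : Real.sin θ * A 1 1 = Real.sin θ * (-A 0 0))
    exact this
  have hdet : A.det = -(A 0 0 ^ 2 + A 0 1 ^ 2) := by
    rw [Matrix.det_fin_two, hc, hd]; ring
  constructor
  · rw [hdet]; nlinarith [sq_nonneg (A 0 0), sq_nonneg (A 0 1)]
  · constructor
    · intro h
      rw [hdet] at h
      have ha : A 0 0 = 0 := by nlinarith [sq_nonneg (A 0 0), sq_nonneg (A 0 1)]
      have hb : A 0 1 = 0 := by nlinarith [sq_nonneg (A 0 0), sq_nonneg (A 0 1)]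
      ext i j
      fin_cases i <;> fin_cases j <;>
        simp_all
    · intro h; rw [h]; simp
end

section
/- Let θ be a real number with sin θ ≠ 0, and let A₁₁, A₁₂, A₂₁, A₂₂ be 2×2 real matrices, each satisfying the relation H_{-θ} * X = X * H_θ, and assume A₁₁ is invertible. Then the 4×4 block matrix A = Matrix.fromBlocks A₁₁ A₁₂ A₂₁ A₂₂ satisfies det A = det A₁₁ · det (A₂₂ - A₂₁ * A₁₁⁻¹ * A₁₂), and det A ≥ 0. -/
open Matrix

lemma det_nonpos_of_comm (θ : ℝ) (hθ : Real.sin θ ≠ 0)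
    (X : Matrix (Fin 2) (Fin 2) ℝ) (h : Hrot (-θ) * X = X * Hrot θ) :
    X.det ≤ 0 := by
  have h01 := congrFun (congrFun h 0) 1
  have h00 := congrFun (congrFun h 0) 0
  simp [Hrot, Matrix.mul_apply, Fin.sum_univ_two, Real.cos_neg, Real.sin_neg] at h01 h00
  have e1 : X 1 0 = X 0 1 := by
    have : Real.sin θ * X 1 0 = Real.sin θ * X 0 1 := by nlinarith [h00]
    exact mul_left_cancel₀ hθ this
  have e2 : X 1 1 = -X 0 0 := by
    have : Real.sin θ * X 1 1 = Real.sin θ * (-X 0 0) := by nlinarith [h01]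
    exact mul_left_cancel₀ hθ this
  rw [Matrix.det_fin_two, e1, e2]
  nlinarith [sq_nonneg (X 0 0), sq_nonneg (X 0 1)]

theorem stmt_2 (θ : ℝ) (hθ : Real.sin θ ≠ 0)
    (A₁₁ A₁₂ A₂₁ A₂₂ : Matrix (Fin 2) (Fin 2) ℝ)
    (h11 : Hrot (-θ) * A₁₁ = A₁₁ * Hrot θ)
    (h12 : Hrot (-θ) * A₁₂ = A₁₂ * Hrot θ)
    (h21 : Hrot (-θ) * A₂₁ = A₂₁ * Hrot θ)
    (h22 : Hrot (-θ) * A₂₂ = A₂₂ * Hrot θ)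
    (hinv : IsUnit A₁₁) :
    (Matrix.fromBlocks A₁₁ A₁₂ A₂₁ A₂₂).det
        = A₁₁.det * (A₂₂ - A₂₁ * A₁₁⁻¹ * A₁₂).det ∧
      0 ≤ (Matrix.fromBlocks A₁₁ A₁₂ A₂₁ A₂₂).det := by
  obtain ⟨I⟩ := hinv.nonempty_invertible
  have hdetU : IsUnit A₁₁.det := (Matrix.isUnit_iff_isUnit_det A₁₁).mp hinv
  have hI : A₁₁ * A₁₁⁻¹ = 1 := Matrix.mul_nonsing_inv A₁₁ hdetU
  have hI' : A₁₁⁻¹ * A₁₁ = 1 := Matrix.nonsing_inv_mul A₁₁ hdetU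
  have hdet : (Matrix.fromBlocks A₁₁ A₁₂ A₂₁ A₂₂).det
      = A₁₁.det * (A₂₂ - A₂₁ * A₁₁⁻¹ * A₁₂).det := by
    rw [Matrix.det_fromBlocks₁₁, Matrix.invOf_eq_nonsing_inv]
  refine ⟨hdet, ?_⟩
  rw [hdet]
  have hinv2 : Hrot θ * A₁₁⁻¹ = A₁₁⁻¹ * Hrot (-θ) := by
    calc Hrot θ * A₁₁⁻¹ = A₁₁⁻¹ * (A₁₁ * Hrot θ) * A₁₁⁻¹ := by
          rw [← Matrix.mul_assoc, hI', Matrix.one_mul]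
      _ = A₁₁⁻¹ * Hrot (-θ) := by
          rw [← h11, Matrix.mul_assoc, Matrix.mul_assoc, hI, Matrix.mul_one]
  have hS : Hrot (-θ) * (A₂₂ - A₂₁ * A₁₁⁻¹ * A₁₂) = (A₂₂ - A₂₁ * A₁₁⁻¹ * A₁₂) * Hrot θ := by
    rw [Matrix.mul_sub, Matrix.sub_mul, h22]
    congr 1
    calc Hrot (-θ) * (A₂₁ * A₁₁⁻¹ * A₁₂)
        = (Hrot (-θ) * A₂₁) * A₁₁⁻¹ * A₁₂ := by
          simp [Matrix.mul_assoc]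
      _ = A₂₁ * (Hrot θ * A₁₁⁻¹) * A₁₂ := by rw [h21]; simp [Matrix.mul_assoc]
      _ = A₂₁ * A₁₁⁻¹ * (Hrot (-θ) * A₁₂) := by rw [hinv2]; simp [Matrix.mul_assoc]
      _ = A₂₁ * A₁₁⁻¹ * A₁₂ * Hrot θ := by rw [h12]; simp [Matrix.mul_assoc]
  have d1 := det_nonpos_of_comm θ hθ A₁₁ h11
  have d2 := det_nonpos_of_comm θ hθ _ hS
  nlinarith [d1, d2]
end

section
/- Let θ be a real number with sin θ ≠ 0, and let H be the 4×4 real block-diagonal matrix Matrix.fromBlocks H_θ 0 0 H_θ. Then every 4×4 real matrix A satisfying (Matrix.fromBlocks H_{-θ} 0 0 H_{-θ}) * A = A * H has det A ≥ 0. In particular, no orientation-reversing linear map of ℝ⁴ can intertwine the rotation H with its inverse. -/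
open Matrix

/-! Every 2×2 block `M` of `A` satisfies `Hrot (-θ) * M = M * Hrot θ`, which for `sin θ ≠ 0`
forces `M = !![x, y; y, -x]`, a scaled reflection, i.e. a conjugate-linear map of `ℂ ≅ ℝ²`.
Hence `A` is conjugate-linear on `ℂ²`, and its determinant is `|det_ℂ|²` of the complex-linear
part; concretely it is an explicit sum of two squares. -/

lemma eq_of_hrot_neg_mul_eq_mul_hrot {θ : ℝ} (hθ : Real.sin θ ≠ 0) {M : Matrix (Fin 2) (Fin 2) ℝ}
    (h : Hrot (-θ) * M = M * Hrot θ) :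
    M = !![M 0 0, M 0 1; M 0 1, -M 0 0] := by
  have h₀₀ := congrFun (congrFun h 0) 0
  have h₀₁ := congrFun (congrFun h 0) 1
  simp only [Hrot, Real.cos_neg, Real.sin_neg, mul_apply, Fin.sum_univ_two, of_apply, cons_val',
    cons_val_zero, cons_val_one, empty_val', cons_val_fin_one] at h₀₀ h₀₁
  have h₁₀ : M 1 0 = M 0 1 := mul_left_cancel₀ hθ (by linarith)
  have h₁₁ : M 1 1 = -M 0 0 := mul_left_cancel₀ hθ (by linarith)
  ext i j
  fin_cases i <;> fin_cases j <;> simp [h₁₀, h₁₁]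

lemma toBlocks_intertwine_of_fromBlocks_intertwine {R n : Type*} [Fintype n] [Semiring R]
    {P Q : Matrix n n R} {A : Matrix (n ⊕ n) (n ⊕ n) R}
    (h : fromBlocks P 0 0 P * A = A * fromBlocks Q 0 0 Q) :
    P * A.toBlocks₁₁ = A.toBlocks₁₁ * Q ∧ P * A.toBlocks₁₂ = A.toBlocks₁₂ * Q ∧
      P * A.toBlocks₂₁ = A.toBlocks₂₁ * Q ∧ P * A.toBlocks₂₂ = A.toBlocks₂₂ * Q := by
  rw [← fromBlocks_toBlocks A, fromBlocks_multiply, fromBlocks_multiply] at h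
  simpa only [Matrix.zero_mul, Matrix.mul_zero, add_zero, zero_add, fromBlocks_inj] using h

lemma det_fromBlocks_scaledReflections {R : Type*} [CommRing R] (a b c d e f g h : R) :
    (fromBlocks !![a, b; b, -a] !![c, d; d, -c] !![e, f; f, -e] !![g, h; h, -g]).det
      = (a * g - b * h - c * e + d * f) ^ 2 + (a * h + b * g - c * f - d * e) ^ 2 := by
  have hsymm : ∀ i : Fin (2 + 2),
      (finSumFinEquiv.symm i : Fin 2 ⊕ Fin 2) = ![.inl 0, .inl 1, .inr 0, .inr 1] i := by decide
  rw [← det_reindex_self finSumFinEquiv, det_succ_row_zero]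
  simp [Fin.sum_univ_succ, det_fin_three, Fin.succAbove, hsymm]
  ring

theorem stmt_3 (θ : ℝ) (hθ : Real.sin θ ≠ 0)
    (A : Matrix (Fin 2 ⊕ Fin 2) (Fin 2 ⊕ Fin 2) ℝ)
    (hA : Matrix.fromBlocks (Hrot (-θ)) 0 0 (Hrot (-θ)) * A
        = A * Matrix.fromBlocks (Hrot θ) 0 0 (Hrot θ)) :
    0 ≤ A.det := by
  obtain ⟨h₁₁, h₁₂, h₂₁, h₂₂⟩ := toBlocks_intertwine_of_fromBlocks_intertwine hA
  rw [← fromBlocks_toBlocks A, eq_of_hrot_neg_mul_eq_mul_hrot hθ h₁₁,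
    eq_of_hrot_neg_mul_eq_mul_hrot hθ h₁₂, eq_of_hrot_neg_mul_eq_mul_hrot hθ h₂₁,
    eq_of_hrot_neg_mul_eq_mul_hrot hθ h₂₂, det_fromBlocks_scaledReflections]
  positivity
end

section
/- Let θ₁, θ₂ be real numbers with sin θ₁ ≠ 0 and sin θ₂ ≠ 0, and suppose that neither θ₁ - θ₂ nor θ₁ + θ₂ is an integer multiple of 2π. Let A = Matrix.fromBlocks A₁₁ A₁₂ A₂₁ A₂₂ be a 4×4 real matrix satisfying (Matrix.fromBlocks H_{-θ₁} 0 0 H_{-θ₂}) * A = A * (Matrix.fromBlocks H_{θ₁} 0 0 H_{θ₂}). Then A₁₂ = 0, A₂₁ = 0, and det A ≥ 0. -/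
open Matrix

/-- Key algebraic lemma: the intertwining equations force the off-diagonal block to vanish. -/
lemma intertwine_zero (c₁ s₁ c₂ s₂ a b c d : ℝ)
    (h1 : (c₁ - c₂)^2 + (s₁ - s₂)^2 ≠ 0) (h2 : (c₁ - c₂)^2 + (s₁ + s₂)^2 ≠ 0)
    (eq1 : (c₁ - c₂)*a + s₁*c - s₂*b = 0) (eq2 : (c₁ - c₂)*b + s₁*d + s₂*a = 0)
    (eq3 : (c₁ - c₂)*c - s₁*a - s₂*d = 0) (eq4 : (c₁ - c₂)*d - s₁*b + s₂*c = 0) :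
    a = 0 ∧ b = 0 ∧ c = 0 ∧ d = 0 := by
  set d₀ := c₁ - c₂ with hd₀
  set K := d₀^2 + s₁^2 + s₂^2 with hK
  have hne : ((c₁ - c₂)^2 + (s₁ - s₂)^2) * ((c₁ - c₂)^2 + (s₁ + s₂)^2) ≠ 0 :=
    mul_ne_zero h1 h2
  have ha : a = 0 := by
    have h : ((c₁ - c₂)^2 + (s₁ - s₂)^2) * ((c₁ - c₂)^2 + (s₁ + s₂)^2) * a = 0 := by
      linear_combination (K*d₀)*eq1 + (K*s₂ - 2*s₁^2*s₂)*eq2 + (-K*s₁ + 2*s₁*s₂^2)*eq3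
        + (-2*s₁*s₂*d₀)*eq4
    exact (mul_eq_zero.mp h).resolve_left hne
  have hd : d = 0 := by
    have h : ((c₁ - c₂)^2 + (s₁ - s₂)^2) * ((c₁ - c₂)^2 + (s₁ + s₂)^2) * d = 0 := by
      linear_combination (-2*s₁*s₂*d₀)*eq1 + (K*s₁ - 2*s₁*s₂^2)*eq2 + (-K*s₂ + 2*s₁^2*s₂)*eq3
        + (K*d₀)*eq4
    exact (mul_eq_zero.mp h).resolve_left hne
  have hb : b = 0 := by
    have h : ((c₁ - c₂)^2 + (s₁ - s₂)^2) * ((c₁ - c₂)^2 + (s₁ + s₂)^2) * b = 0 := by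
      linear_combination (-K*s₂ + 2*s₁^2*s₂)*eq1 + (K*d₀)*eq2 + (2*s₁*s₂*d₀)*eq3
        + (-K*s₁ + 2*s₁*s₂^2)*eq4
    exact (mul_eq_zero.mp h).resolve_left hne
  have hc : c = 0 := by
    have h : ((c₁ - c₂)^2 + (s₁ - s₂)^2) * ((c₁ - c₂)^2 + (s₁ + s₂)^2) * c = 0 := by
      linear_combination (K*s₁ - 2*s₁*s₂^2)*eq1 + (2*s₁*s₂*d₀)*eq2 + (K*d₀)*eq3
        + (K*s₂ - 2*s₁^2*s₂)*eq4
    exact (mul_eq_zero.mp h).resolve_left hne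
  exact ⟨ha, hb, hc, hd⟩

/-- If `H(-θ) * M = M * H(θ)` with `sin θ ≠ 0` then `det M ≤ 0`. -/
lemma diag_det_nonpos (θ : ℝ) (hθ : Real.sin θ ≠ 0) (M : Matrix (Fin 2) (Fin 2) ℝ)
    (hE : Hrot (-θ) * M = M * Hrot θ) : M.det ≤ 0 := by
  have e1 := Matrix.ext_iff.mpr hE 0 0
  have e2 := Matrix.ext_iff.mpr hE 0 1
  simp [Hrot, Matrix.mul_apply, Fin.sum_univ_two] at e1 e2
  have hc : M 1 0 = M 0 1 := by
    have h : Real.sin θ * (M 1 0 - M 0 1) = 0 := by linear_combination e1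
    have := (mul_eq_zero.mp h).resolve_left hθ
    linarith
  have hd : M 1 1 = -(M 0 0) := by
    have h : Real.sin θ * (M 1 1 + M 0 0) = 0 := by linear_combination e2
    have := (mul_eq_zero.mp h).resolve_left hθ
    linarith
  rw [Matrix.det_fin_two, hc, hd]
  nlinarith [sq_nonneg (M 0 0), sq_nonneg (M 0 1)]

/-- Vanishing of an off-diagonal block from the intertwining relation. -/
lemma offdiag_zero (θ₁ θ₂ : ℝ)
    (hdiff : ¬ ∃ m : ℤ, θ₁ - θ₂ = m * (2 * Real.pi))
    (hsum : ¬ ∃ m : ℤ, θ₁ + θ₂ = m * (2 * Real.pi))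
    (M : Matrix (Fin 2) (Fin 2) ℝ) (hE : Hrot (-θ₁) * M = M * Hrot θ₂) : M = 0 := by
  have h1 : (Real.cos θ₁ - Real.cos θ₂)^2 + (Real.sin θ₁ - Real.sin θ₂)^2 ≠ 0 := by
    intro h
    have hcc : Real.cos θ₁ = Real.cos θ₂ := by nlinarith [sq_nonneg (Real.cos θ₁ - Real.cos θ₂), sq_nonneg (Real.sin θ₁ - Real.sin θ₂)]
    have hss : Real.sin θ₁ = Real.sin θ₂ := by nlinarith [sq_nonneg (Real.cos θ₁ - Real.cos θ₂), sq_nonneg (Real.sin θ₁ - Real.sin θ₂)]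
    have hone : Real.cos (θ₁ - θ₂) = 1 := by
      rw [Real.cos_sub, hcc, hss]
      linear_combination Real.cos_sq_add_sin_sq θ₂
    obtain ⟨n, hn⟩ := (Real.cos_eq_one_iff _).mp hone
    exact hdiff ⟨n, hn.symm⟩
  have h2 : (Real.cos θ₁ - Real.cos θ₂)^2 + (Real.sin θ₁ + Real.sin θ₂)^2 ≠ 0 := by
    intro h
    have hcc : Real.cos θ₁ = Real.cos θ₂ := by nlinarith [sq_nonneg (Real.cos θ₁ - Real.cos θ₂), sq_nonneg (Real.sin θ₁ + Real.sin θ₂)]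
    have hss : Real.sin θ₁ = -Real.sin θ₂ := by nlinarith [sq_nonneg (Real.cos θ₁ - Real.cos θ₂), sq_nonneg (Real.sin θ₁ + Real.sin θ₂)]
    have hone : Real.cos (θ₁ + θ₂) = 1 := by
      rw [Real.cos_add, hcc, hss]
      linear_combination Real.cos_sq_add_sin_sq θ₂
    obtain ⟨n, hn⟩ := (Real.cos_eq_one_iff _).mp hone
    exact hsum ⟨n, hn.symm⟩
  have e00 := Matrix.ext_iff.mpr hE 0 0
  have e01 := Matrix.ext_iff.mpr hE 0 1
  have e10 := Matrix.ext_iff.mpr hE 1 0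
  have e11 := Matrix.ext_iff.mpr hE 1 1
  simp [Hrot, Matrix.mul_apply, Fin.sum_univ_two] at e00 e01 e10 e11
  obtain ⟨ha, hb, hc, hd⟩ := intertwine_zero (Real.cos θ₁) (Real.sin θ₁) (Real.cos θ₂)
    (Real.sin θ₂) (M 0 0) (M 0 1) (M 1 0) (M 1 1) h1 h2
    (by linear_combination e00) (by linear_combination e01)
    (by linear_combination e10) (by linear_combination e11)
  ext i j
  fin_cases i <;> fin_cases j <;> simpa using by assumption

theorem stmt_4 (θ₁ θ₂ : ℝ) (hθ₁ : Real.sin θ₁ ≠ 0) (hθ₂ : Real.sin θ₂ ≠ 0)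
    (hdiff : ¬ ∃ m : ℤ, θ₁ - θ₂ = m * (2 * Real.pi))
    (hsum : ¬ ∃ m : ℤ, θ₁ + θ₂ = m * (2 * Real.pi))
    (A₁₁ A₁₂ A₂₁ A₂₂ : Matrix (Fin 2) (Fin 2) ℝ)
    (hA : Matrix.fromBlocks (Hrot (-θ₁)) 0 0 (Hrot (-θ₂))
          * Matrix.fromBlocks A₁₁ A₁₂ A₂₁ A₂₂
        = Matrix.fromBlocks A₁₁ A₁₂ A₂₁ A₂₂
          * Matrix.fromBlocks (Hrot θ₁) 0 0 (Hrot θ₂)) :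
    A₁₂ = 0 ∧ A₂₁ = 0 ∧ 0 ≤ (Matrix.fromBlocks A₁₁ A₁₂ A₂₁ A₂₂).det := by
  rw [Matrix.fromBlocks_multiply, Matrix.fromBlocks_multiply] at hA
  simp only [Matrix.zero_mul, Matrix.mul_zero, add_zero, zero_add] at hA
  have h11 : Hrot (-θ₁) * A₁₁ = A₁₁ * Hrot θ₁ := congrArg Matrix.toBlocks₁₁ hA
  have h12 : Hrot (-θ₁) * A₁₂ = A₁₂ * Hrot θ₂ := congrArg Matrix.toBlocks₁₂ hA
  have h21 : Hrot (-θ₂) * A₂₁ = A₂₁ * Hrot θ₁ := congrArg Matrix.toBlocks₂₁ hA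
  have h22 : Hrot (-θ₂) * A₂₂ = A₂₂ * Hrot θ₂ := congrArg Matrix.toBlocks₂₂ hA
  have hz12 : A₁₂ = 0 := offdiag_zero θ₁ θ₂ hdiff hsum A₁₂ h12
  have hdiff' : ¬ ∃ m : ℤ, θ₂ - θ₁ = m * (2 * Real.pi) := by
    rintro ⟨m, hm⟩
    exact hdiff ⟨-m, by push_cast; linarith⟩
  have hsum' : ¬ ∃ m : ℤ, θ₂ + θ₁ = m * (2 * Real.pi) := by
    rintro ⟨m, hm⟩
    exact hsum ⟨m, by linarith⟩
  have hz21 : A₂₁ = 0 := offdiag_zero θ₂ θ₁ hdiff' hsum' A₂₁ h21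
  refine ⟨hz12, hz21, ?_⟩
  rw [hz12, hz21, Matrix.det_fromBlocks_zero₁₂]
  have d1 := diag_det_nonpos θ₁ hθ₁ A₁₁ h11
  have d2 := diag_det_nonpos θ₂ hθ₂ A₂₂ h22
  nlinarith [d1, d2]
end

section
/- Let θ be a real number with sin θ ≠ 0 and let k be an integer such that (k² + 1)·θ is an integer multiple of 2π. If A is a 2×2 real matrix satisfying A * H_θ = H_{k·θ} * A, then A = 0. -/
open Matrix

lemma Hrot_add (α β : ℝ) : Hrot α * Hrot β = Hrot (α + β) := by
  ext i j
  fin_cases i <;> fin_cases j <;>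
    simp [Hrot, Matrix.mul_apply, Fin.sum_univ_two, Real.cos_add, Real.sin_add] <;> ring

lemma Hrot_zero : Hrot 0 = 1 := by
  simp [Hrot, Matrix.one_fin_two]

lemma Hrot_inv (α : ℝ) : Hrot (-α) * Hrot α = 1 := by
  rw [Hrot_add, neg_add_cancel, Hrot_zero]

lemma Hrot_key (A : Matrix (Fin 2) (Fin 2) ℝ) (α β : ℝ)
    (h : A * Hrot α = Hrot β * A) (n : ℕ) :
    A * Hrot (n * α) = Hrot (n * β) * A := by
  induction n with
  | zero => simp [Hrot_zero]
  | succ n ih =>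
    push_cast
    have h1 : ((n : ℝ) + 1) * α = n * α + α := by ring
    have h2 : ((n : ℝ) + 1) * β = n * β + β := by ring
    rw [h1, h2, ← Hrot_add, ← Hrot_add, ← mul_assoc, ih, mul_assoc, h, ← mul_assoc]

theorem stmt_5 (θ : ℝ) (hθ : Real.sin θ ≠ 0) (k : ℤ)
    (hk : ∃ m : ℤ, ((k : ℝ) ^ 2 + 1) * θ = m * (2 * Real.pi))
    (A : Matrix (Fin 2) (Fin 2) ℝ)
    (hA : A * Hrot θ = Hrot ((k : ℝ) * θ) * A) :
    A = 0 := by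
  -- inverse relation
  have hA' : A * Hrot (-θ) = Hrot (-((k : ℝ) * θ)) * A := by
    have h1 := congrArg (fun M => Hrot (-((k:ℝ)*θ)) * M * Hrot (-θ)) hA
    simp only [← mul_assoc] at h1
    rw [Hrot_inv, one_mul] at h1
    rw [← h1, mul_assoc, mul_assoc, Hrot_add, add_neg_cancel, Hrot_zero, mul_one]
  -- power relation: A * Hrot (kθ) = Hrot (k²θ) * A
  have hA2 : A * Hrot ((k : ℝ) * θ) = Hrot ((k : ℝ) ^ 2 * θ) * A := by
    rcases le_or_gt 0 k with hk0 | hk0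
    · lift k to ℕ using hk0 with n
      have := Hrot_key A θ ((n : ℝ) * θ) hA n
      push_cast at this ⊢
      convert this using 3 <;> ring
    · have hn : ((-k).toNat : ℝ) = -(k : ℝ) := by
        have : ((-k).toNat : ℤ) = -k := Int.toNat_of_nonneg (by omega)
        exact_mod_cast congrArg (fun x : ℤ => (x : ℝ)) this
      have := Hrot_key A (-θ) (-((k : ℝ) * θ)) hA' (-k).toNat
      rw [hn] at this
      convert this using 3 <;> ring
  -- Hrot (k²θ) = Hrot (-θ)
  obtain ⟨m, hm⟩ := hk
  have hper : Hrot ((k : ℝ) ^ 2 * θ) = Hrot (-θ) := by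
    have heq : (k : ℝ) ^ 2 * θ = -θ + m * (2 * Real.pi) := by linarith
    rw [heq]
    ext i j
    fin_cases i <;> fin_cases j <;>
      simp [Hrot, Real.cos_add_int_mul_two_pi, Real.sin_add_int_mul_two_pi]
  rw [hper] at hA2
  -- B = A² intertwines θ with -θ
  have hB : A * A * Hrot θ = Hrot (-θ) * (A * A) := by
    rw [mul_assoc, hA, ← mul_assoc, hA2, mul_assoc]
  -- entrywise
  set a := A 0 0 with ha; set b := A 0 1 with hb
  set c := A 1 0 with hc; set d := A 1 1 with hd
  have e1 := congrFun (congrFun hB 0) 0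
  have e2 := congrFun (congrFun hB 0) 1
  simp [Hrot, Matrix.mul_apply, Fin.sum_univ_two, Real.cos_neg, Real.sin_neg,
    ← ha, ← hb, ← hc, ← hd] at e1 e2
  -- det A = 0 via A² intertwining
  have hR : c * a + d * c = a * b + b * d := by
    have h0 : Real.sin θ * ((a * b + b * d) - (c * a + d * c)) = 0 := by
      linear_combination e1
    rcases mul_eq_zero.mp h0 with h | h
    · exact absurd h hθ
    · linarith
  have hS : c * b + d * d = -(a * a + b * c) := by
    have h0 : Real.sin θ * ((c * b + d * d) + (a * a + b * c)) = 0 := by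
      linear_combination -e2
    rcases mul_eq_zero.mp h0 with h | h
    · exact absurd h hθ
    · linarith
  have hsq : (a * d - b * c) ^ 2 + (a * a + b * c) ^ 2 + (a * b + b * d) ^ 2 = 0 := by
    linear_combination (a * a + b * c) * hS - (a * b + b * d) * hR
  have hdet : a * d - b * c = 0 := by
    nlinarith [sq_nonneg (a * d - b * c), sq_nonneg (a * a + b * c), sq_nonneg (a * b + b * d)]
  -- original relation entrywise
  have f1 := congrFun (congrFun hA 0) 0
  have f2 := congrFun (congrFun hA 0) 1
  have f3 := congrFun (congrFun hA 1) 0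
  have f4 := congrFun (congrFun hA 1) 1
  simp [Hrot, Matrix.mul_apply, Fin.sum_univ_two, ← ha, ← hb, ← hc, ← hd] at f1 f2 f3 f4
  have hsum : Real.sin θ * (a ^ 2 + b ^ 2 + c ^ 2 + d ^ 2) = 0 := by
    linear_combination b * f1 + d * f3 - a * f2 - c * f4 + 2 * Real.sin ((k : ℝ) * θ) * hdet
  have hzero : a ^ 2 + b ^ 2 + c ^ 2 + d ^ 2 = 0 := by
    rcases mul_eq_zero.mp hsum with h | h
    · exact absurd h hθ
    · exact h
  clear hA hA' hA2 hB hper e1 e2 f1 f2 f3 f4 hR hS hsq hsum hdet hm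
  have ea : a = 0 := by nlinarith [sq_nonneg a, sq_nonneg b, sq_nonneg c, sq_nonneg d]
  have eb : b = 0 := by nlinarith [sq_nonneg a, sq_nonneg b, sq_nonneg c, sq_nonneg d]
  have ec : c = 0 := by nlinarith [sq_nonneg a, sq_nonneg b, sq_nonneg c, sq_nonneg d]
  have ed : d = 0 := by nlinarith [sq_nonneg a, sq_nonneg b, sq_nonneg c, sq_nonneg d]
  ext i j
  fin_cases i <;> fin_cases j
  · exact ea
  · exact eb
  · exact ec
  · exact ed
end

section
/- Let G be a group and n ≥ 1. Let ξ ∈ G be an element of order 2^n, and let λ ∈ G and k ∈ ℤ be such that λ * ξ * λ⁻¹ = ξ^k, λ * ξ * λ⁻¹ ≠ ξ, and λ² commutes with ξ. Then either λ * ξ * λ⁻¹ = ξ⁻¹, or n ≥ 3 and λ * ξ² * λ⁻¹ equals ξ² or ξ⁻². -/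
lemma key_arith (n : ℕ) (hn : 1 ≤ n) (k : ℤ) (hdvd : (2:ℤ)^n ∣ k^2 - 1)
    (hne : ¬ (2:ℤ)^n ∣ k - 1) :
    (2:ℤ)^n ∣ k + 1 ∨ (3 ≤ n ∧ ((2:ℤ)^n ∣ 2*k - 2 ∨ (2:ℤ)^n ∣ 2*k + 2)) := by
  have h2 : (2:ℤ) ∣ k^2 - 1 := by
    refine dvd_trans ?_ hdvd
    calc (2:ℤ) = 2^1 := (pow_one 2).symm
    _ ∣ 2^n := pow_dvd_pow 2 hn
  have hk : Odd k := by
    rcases Int.even_or_odd k with he | ho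
    · exfalso
      obtain ⟨m, hm⟩ := he
      obtain ⟨c, hc⟩ := h2
      have h4 : (m + m)^2 = 4 * (m * m) := by ring
      rw [hm, h4] at hc
      omega
    · exact ho
  obtain ⟨m, hm⟩ := hk
  subst hm
  rcases Nat.lt_or_ge n 3 with hlt | hge
  · -- n = 1 or 2
    interval_cases n
    · left; exact ⟨m + 1, by ring⟩
    · left
      have hmo : ¬ (2:ℤ) ∣ m := fun ⟨t, ht⟩ => hne ⟨t, by rw [ht]; ring⟩
      rcases Int.even_or_odd m with ⟨t, ht⟩ | ⟨t, ht⟩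
      · exact absurd ⟨t, by omega⟩ hmo
      · exact ⟨t + 1, by rw [ht]; ring⟩
  · right
    obtain ⟨j, rfl⟩ : ∃ j, n = j + 2 := ⟨n - 2, by omega⟩
    refine ⟨hge, ?_⟩
    obtain ⟨c, hc⟩ := hdvd
    have hd : m * (m + 1) = 2^j * c := by
      have h4 : (4:ℤ) * (m * (m + 1)) = 4 * (2^j * c) := by linear_combination hc
      linarith
    rcases Int.even_or_odd m with ⟨t, ht⟩ | ⟨t, ht⟩
    · -- m even, m+1 odd, so 2^j ∣ m
      left
      have hcop : IsCoprime ((2:ℤ)^j) (m + 1) := by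
        refine IsCoprime.pow_left ⟨-t, 1, by linarith⟩
      have hdm : (2:ℤ)^j ∣ m := hcop.dvd_of_dvd_mul_right ⟨c, hd⟩
      obtain ⟨d, hdd⟩ := hdm
      exact ⟨d, by linear_combination 4 * hdd⟩
    · -- m odd, so 2^j ∣ m+1
      right
      have hcop : IsCoprime ((2:ℤ)^j) m := by
        refine IsCoprime.pow_left ⟨-t, 1, by linarith⟩
      have hdm : (2:ℤ)^j ∣ m + 1 := hcop.dvd_of_dvd_mul_left ⟨c, hd⟩
      obtain ⟨d, hdd⟩ := hdm
      exact ⟨d, by linear_combination 4 * hdd⟩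

theorem stmt_8 {G : Type*} [Group G] (n : ℕ) (hn : 1 ≤ n) (ξ lam : G) (k : ℤ)
    (hord : orderOf ξ = 2 ^ n)
    (hconj : lam * ξ * lam⁻¹ = ξ ^ k)
    (hne : lam * ξ * lam⁻¹ ≠ ξ)
    (hcomm : lam ^ 2 * ξ = ξ * lam ^ 2) :
    lam * ξ * lam⁻¹ = ξ⁻¹ ∨
      (3 ≤ n ∧ (lam * ξ ^ 2 * lam⁻¹ = ξ ^ 2 ∨ lam * ξ ^ 2 * lam⁻¹ = (ξ ^ 2)⁻¹)) := by
  have hzpow : ∀ m : ℤ, lam * ξ ^ m * lam⁻¹ = ξ ^ (k * m) := by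
    intro m
    rw [← conj_zpow, hconj, ← zpow_mul]
  have hsq : ξ ^ (k * k) = ξ := by
    have h1 : lam * (lam * ξ * lam⁻¹) * lam⁻¹ = ξ ^ (k * k) := by
      rw [hconj, hzpow]
    have h2 : lam * (lam * ξ * lam⁻¹) * lam⁻¹ = lam ^ 2 * ξ * (lam ^ 2)⁻¹ := by
      rw [pow_two]; group
    rw [h2, hcomm] at h1
    rw [← h1]
    group
  have hdiv : ∀ m : ℤ, (2:ℤ)^n ∣ m → ξ ^ m = 1 := by
    intro m h
    apply orderOf_dvd_iff_zpow_eq_one.mp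
    rw [hord]
    push_cast
    exact h
  have hdvd : ((2:ℤ)^n) ∣ k ^ 2 - 1 := by
    have hz : ξ ^ (k ^ 2 - 1) = 1 := by
      rw [zpow_sub, zpow_one, pow_two, hsq, mul_inv_cancel]
    have h := orderOf_dvd_iff_zpow_eq_one.mpr hz
    rw [hord] at h
    exact_mod_cast h
  have hne' : ¬ ((2:ℤ)^n) ∣ k - 1 := by
    intro h
    apply hne
    have h1 := hdiv _ h
    rw [zpow_sub, zpow_one] at h1
    rw [hconj, ← mul_inv_eq_one]
    exact h1
  rcases key_arith n hn k hdvd hne' with h | ⟨h3, h | h⟩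
  · left
    rw [hconj]
    have h1 := hdiv _ h
    rw [zpow_add, zpow_one] at h1
    exact mul_eq_one_iff_eq_inv.mp h1
  · right
    refine ⟨h3, Or.inl ?_⟩
    have e : lam * ξ ^ (2:ℤ) * lam⁻¹ = ξ ^ (k * 2) := hzpow 2
    have h1 : ξ ^ (k * 2) = ξ ^ (2:ℤ) := by
      have h2 := hdiv (k * 2 - 2) (by rwa [show k * 2 - 2 = 2 * k - 2 by ring])
      rw [show (k * 2 : ℤ) = (k * 2 - 2) + 2 by ring, zpow_add, h2, one_mul]
    have : lam * ξ ^ (2:ℤ) * lam⁻¹ = ξ ^ (2:ℤ) := e.trans h1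
    rw [show (ξ:G) ^ (2:ℕ) = ξ ^ (2:ℤ) from by norm_cast]; exact this
  · right
    refine ⟨h3, Or.inr ?_⟩
    have e : lam * ξ ^ (2:ℤ) * lam⁻¹ = ξ ^ (k * 2) := hzpow 2
    have h1 : ξ ^ (k * 2) = (ξ ^ (2:ℤ))⁻¹ := by
      have h2 := hdiv (k * 2 + 2) (by rwa [show k * 2 + 2 = 2 * k + 2 by ring])
      rw [zpow_add] at h2
      exact mul_eq_one_iff_eq_inv.mp h2
    have : lam * ξ ^ (2:ℤ) * lam⁻¹ = (ξ ^ (2:ℤ))⁻¹ := e.trans h1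
    rw [show (ξ:G) ^ (2:ℕ) = ξ ^ (2:ℤ) from by norm_cast]; exact this
end

section
/- Let V be a finite group in which every element g satisfies g * g = 1, let h ∈ V with h ≠ 1, let φ be a group automorphism of V with φ(h) = h, and let x ∈ V. If the φ-orbit of x (the set of all φ^n(x) for n ∈ ℕ) has odd cardinality, then x * h does not belong to the φ-orbit of x. -/
private lemma mulAut_pow_apply {V : Type*} [Group V] (φ : MulAut V) (n : ℕ) (x : V) :
    (φ ^ n) x = (⇑φ)^[n] x := by
  induction n generalizing x with
  | zero => simp
  | succ n ih =>
    rw [pow_succ, Function.iterate_succ_apply]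
    exact (by rw [MulAut.mul_apply]; exact ih (φ x))

private lemma mulAut_pow_fix {V : Type*} [Group V] (φ : MulAut V) (h : V) (hfix : φ h = h)
    (n : ℕ) : (φ ^ n) h = h := by
  induction n with
  | zero => simp
  | succ n ih => rw [pow_succ, MulAut.mul_apply, hfix, ih]

theorem stmt_11 {V : Type*} [Group V] [Finite V]
    (hsq : ∀ g : V, g * g = 1) (h : V) (hh : h ≠ 1)
    (φ : MulAut V) (hfix : φ h = h) (x : V)
    (hodd : Odd ((Set.range fun n : ℕ => (φ ^ n) x).ncard)) :
    x * h ∉ Set.range fun n : ℕ => (φ ^ n) x := by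
  classical
  set f : V → V := ⇑φ with hf
  -- x is a periodic point of f
  have key : ∀ a b : ℕ, a < b → (φ ^ a) x = (φ ^ b) x → x ∈ Function.periodicPts f := by
    intro a b hab heq
    refine ⟨b - a, by omega, ?_⟩
    have h1 : (φ ^ a) ((φ ^ (b - a)) x) = (φ ^ a) x := by
      rw [← MulAut.mul_apply, ← pow_add, Nat.add_sub_cancel' hab.le, heq]
    have h2 := (φ ^ a).injective h1
    show f^[b - a] x = x
    rw [← mulAut_pow_apply]
    exact h2
  have hper : x ∈ Function.periodicPts f := by
    obtain ⟨a, b, hab, heq⟩ := Finite.exists_ne_map_eq_of_infinite fun n : ℕ => (φ ^ n) x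
    rcases hab.lt_or_gt with hlt | hlt
    · exact key a b hlt heq
    · exact key b a hlt heq.symm
  set m := Function.minimalPeriod f x with hmdef
  have hm : 0 < m := Function.minimalPeriod_pos_of_mem_periodicPts hper
  -- the orbit has exactly m elements
  have hS : (Set.range fun n : ℕ => (φ ^ n) x)
      = ↑((Finset.range m).image fun n => f^[n] x) := by
    ext y
    simp only [Set.mem_range, Finset.coe_image, Finset.coe_range, Set.mem_image,
      Set.mem_Iio, mulAut_pow_apply]
    constructor
    · rintro ⟨n, hn⟩
      exact ⟨n % m, Nat.mod_lt _ hm, by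
        rw [hmdef, Function.iterate_mod_minimalPeriod_eq]; exact hn⟩
    · rintro ⟨n, _, hn⟩; exact ⟨n, hn⟩
  have hodd' : Odd m := by
    rwa [hS, Set.ncard_coe_finset,
      Finset.card_image_of_injOn (by
        rw [Finset.coe_range]; exact Function.iterate_injOn_Iio_minimalPeriod),
      Finset.card_range] at hodd
  rintro ⟨k, hk0⟩
  have hk : (φ ^ k) x = x * h := hk0
  -- hk : (φ ^ k) x = x * h
  have e1 : f^[k] x = x * h := by rw [← mulAut_pow_apply]; exact hk
  have h2k : Function.IsPeriodicPt f (k + k) x := by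
    show f^[k + k] x = x
    rw [Function.iterate_add_apply, e1, ← mulAut_pow_apply, map_mul,
      mulAut_pow_fix φ h hfix, hk, mul_assoc, hsq h, mul_one]
  have hdvd : m ∣ k * 2 := by
    have := Function.IsPeriodicPt.minimalPeriod_dvd h2k
    rwa [show k + k = k * 2 by ring] at this
  have hmk : m ∣ k := ((Nat.coprime_two_right.mpr hodd')).dvd_of_dvd_mul_right hdvd
  have hkx : f^[k] x = x :=
    (Function.isPeriodicPt_iff_minimalPeriod_dvd.mpr hmk : Function.IsPeriodicPt f k x)
  rw [hkx] at e1
  exact hh (by simpa using e1.symm)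
end

section
/- Let V be a group with exactly 8 elements in which every element g satisfies g * g = 1, let h ∈ V with h ≠ 1, and let φ be a group automorphism of V with φ(h) = h. Then for every x ∈ V with x ≠ 1 and x ≠ h, the φ-orbit of x (the set of all φ^n(x) for n ∈ ℕ) has cardinality at most 4. In particular φ does not act transitively on the six-element set V ∖ {1, h}. -/
theorem stmt_12 {V : Type*} [Group V] (hcard : Nat.card V = 8)
    (hsq : ∀ g : V, g * g = 1) (h : V) (hh : h ≠ 1)
    (φ : MulAut V) (hfix : φ h = h) :
    (∀ x : V, x ≠ 1 → x ≠ h →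
        (Set.range fun n : ℕ => (φ ^ n) x).ncard ≤ 4) ∧
      ¬ ∃ x : V, x ≠ 1 ∧ x ≠ h ∧
        ∀ y : V, y ≠ 1 → y ≠ h → y ∈ Set.range fun n : ℕ => (φ ^ n) x := by
  classical
  have hfinV : Finite V := Nat.finite_of_card_ne_zero (by omega)
  haveI : Fintype V := Fintype.ofFinite V
  -- basic structure of V
  have hinv : ∀ a : V, a⁻¹ = a := fun a => inv_eq_of_mul_eq_one_right (hsq a)
  have hcomm : ∀ a b : V, a * b = b * a := by
    intro a b
    calc a * b = (a * b)⁻¹ := (hinv _).symm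
    _ = b⁻¹ * a⁻¹ := mul_inv_rev a b
    _ = b * a := by rw [hinv, hinv]
  have hcancel : ∀ p q : V, p * (p * q) = q := fun p q => by
    rw [← mul_assoc, hsq, one_mul]
  have hid : ∀ p q : V, p * q = 1 → p = q := fun p q hc => by
    rw [← hinv q]; exact eq_inv_of_mul_eq_one_left hc
  have hright : ∀ p q : V, p * q = q → p = 1 := fun p q hc => by
    calc p = p * 1 := (mul_one p).symm
    _ = p * (q * q) := by rw [hsq]
    _ = p * q * q := (mul_assoc _ _ _).symm
    _ = q * q := by rw [hc]
    _ = 1 := hsq q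
  -- powers of φ as iterates
  have hpow : ∀ n : ℕ, ⇑(φ ^ n) = (⇑φ)^[n] :=
    hom_coe_pow (fun e : MulAut V => ⇑e) rfl (fun _ _ => rfl) φ
  have hfixn : ∀ n : ℕ, (φ ^ n) h = h := by
    intro n
    induction n with
    | zero => rfl
    | succ n ih => rw [pow_succ, MulAut.mul_apply, hfix, ih]
  have hfixIt : ∀ n : ℕ, (⇑φ)^[n] h = h := fun n => by rw [← hpow]; exact hfixn n
  have hinj : ∀ n : ℕ, Function.Injective ((⇑φ)^[n]) :=
    fun n => Function.Injective.iterate φ.injective n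
  -- card of V minus {1, h}
  have hcard2 : ({1, h} : Finset V).card = 2 := by
    rw [Finset.card_insert_of_notMem (by simp [Ne.symm hh]), Finset.card_singleton]
  have hcardU : (Finset.univ : Finset V).card = 8 := by
    rw [Finset.card_univ, ← Nat.card_eq_fintype_card, hcard]
  have hC6 : (Finset.univ \ {1, h} : Finset V).card = 6 := by
    rw [Finset.card_sdiff_of_subset (Finset.subset_univ _), hcard2, hcardU]
  -- main bound on the minimal period
  have key : ∀ x : V, x ≠ 1 → x ≠ h →
      (Set.range fun n : ℕ => (φ ^ n) x) =
        ↑((Finset.range (Function.minimalPeriod (⇑φ) x)).image fun n => (⇑φ)^[n] x) ∧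
      ((Finset.range (Function.minimalPeriod (⇑φ) x)).image fun n => (⇑φ)^[n] x).card
        = Function.minimalPeriod (⇑φ) x ∧
      Function.minimalPeriod (⇑φ) x ≤ 4 := by
    intro x hx1 hxh
    set k := Function.minimalPeriod (⇑φ) x with hkdef
    set Ofin : Finset V := (Finset.range k).image (fun n => (⇑φ)^[n] x) with hOdef
    -- x is a periodic point
    have hperm : ∀ n : ℕ, ⇑(φ.toEquiv ^ n) = (⇑φ)^[n] :=
      hom_coe_pow (fun e : Equiv.Perm V => ⇑e) rfl (fun _ _ => rfl) φ.toEquiv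
    have hper : Function.IsPeriodicPt (⇑φ) (orderOf φ.toEquiv) x := by
      show (⇑φ)^[orderOf φ.toEquiv] x = x
      rw [← hperm, pow_orderOf_eq_one]; rfl
    have hk : 0 < k := hper.minimalPeriod_pos (orderOf_pos φ.toEquiv)
    have hkx : (⇑φ)^[k] x = x := Function.isPeriodicPt_minimalPeriod (⇑φ) x
    -- orbit avoids 1 and h
    have hne1 : ∀ n : ℕ, (⇑φ)^[n] x ≠ 1 := by
      intro n hc
      apply hx1
      apply hinj n
      rw [hc, ← hpow, map_one]
    have hneh : ∀ n : ℕ, (⇑φ)^[n] x ≠ h := by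
      intro n hc
      apply hxh
      apply hinj n
      rw [hc, hfixIt]
    have hmemO : ∀ n : ℕ, (⇑φ)^[n] x ∈ Ofin := by
      intro n
      refine Finset.mem_image.mpr ⟨n % k, Finset.mem_range.mpr (Nat.mod_lt _ hk), ?_⟩
      exact Function.iterate_mod_minimalPeriod_eq
    have hrange : (Set.range fun n : ℕ => (φ ^ n) x) = ↑Ofin := by
      ext g
      constructor
      · rintro ⟨n, rfl⟩
        simpa [hpow] using hmemO n
      · intro hg
        obtain ⟨n, _, hn⟩ := Finset.mem_image.mp hg
        exact ⟨n, by show (φ ^ n) x = g; rw [hpow n]; exact hn⟩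
    have hcardO : Ofin.card = k := by
      rw [hOdef, Finset.card_image_of_injOn, Finset.card_range]
      rw [Finset.coe_range]
      exact Function.iterate_injOn_Iio_minimalPeriod
    have hsub : Ofin ⊆ Finset.univ \ {1, h} := by
      intro g hg
      obtain ⟨n, _, rfl⟩ := Finset.mem_image.mp hg
      simp [hne1 n, hneh n]
    have hk6 : k ≤ 6 := by
      calc k = Ofin.card := hcardO.symm
      _ ≤ (Finset.univ \ {1, h} : Finset V).card := Finset.card_le_card hsub
      _ = 6 := hC6
    -- k ≠ 6
    have hknot6 : k ≠ 6 := by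
      intro hk6'
      have hOeq : Ofin = Finset.univ \ {1, h} :=
        Finset.eq_of_subset_of_card_le hsub (by rw [hcardO, hk6', hC6])
      -- h * x lies in the orbit
      have hhx : h * x ∈ Ofin := by
        rw [hOeq]
        have h1 : h * x ≠ 1 := fun hc => hxh ((hid h x hc).symm)
        have h2 : h * x ≠ h := by
          intro hc
          apply hx1
          calc x = h * (h * x) := (hcancel h x).symm
          _ = h * h := by rw [hc]
          _ = 1 := hsq h
        simp [h1, h2]
      obtain ⟨j, hjlt, hj⟩ := Finset.mem_image.mp hhx
      rw [Finset.mem_range] at hjlt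
      have hj0 : j ≠ 0 := by
        intro hc
        subst hc
        exact hh (hright h x (by simpa using hj.symm))
      -- φ^[2j] x = x, so 6 ∣ 2j, hence j = 3
      have h2j : (⇑φ)^[j + j] x = x := by
        rw [Function.iterate_add_apply, hj, ← hpow, map_mul, hpow, hfixIt, hj,
          hcancel]
      have hdvd : k ∣ j + j :=
        Function.IsPeriodicPt.minimalPeriod_dvd h2j
      have hj3 : j = 3 := by
        obtain ⟨c, hc⟩ := hdvd
        rw [hk6'] at hc hjlt
        omega
      subst hj3
      -- a = x * φ x * φ² x satisfies φ a = h * a, hence φ² a = a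
      set a : V := x * (⇑φ)^[1] x * (⇑φ)^[2] x with hadef
      have hφa : φ a = h * a := by
        have h1 : φ a = (⇑φ)^[1] x * (⇑φ)^[2] x * (h * x) := by
          rw [hadef, map_mul, map_mul, ← hj]
          have e1 : φ x = (⇑φ)^[1] x := rfl
          have e2 : φ ((⇑φ)^[1] x) = (⇑φ)^[2] x :=
            (Function.iterate_succ_apply' (⇑φ) 1 x).symm
          have e3 : φ ((⇑φ)^[2] x) = (⇑φ)^[3] x :=
            (Function.iterate_succ_apply' (⇑φ) 2 x).symm
          rw [e1, e2, e3]
        rw [h1, hadef]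
        calc (⇑φ)^[1] x * (⇑φ)^[2] x * (h * x)
            = h * x * ((⇑φ)^[1] x * (⇑φ)^[2] x) := hcomm _ _
        _ = h * (x * ((⇑φ)^[1] x * (⇑φ)^[2] x)) := mul_assoc _ _ _
        _ = h * (x * (⇑φ)^[1] x * (⇑φ)^[2] x) := by rw [mul_assoc x]
      have hφ2a : (⇑φ)^[2] a = a := by
        have : φ (φ a) = a := by rw [hφa, map_mul, hfix, hφa, hcancel]
        simpa [Function.iterate_succ_apply] using this
      have ha1 : a ≠ 1 := by
        intro hc
        apply hh
        have : φ a = h := by rw [hφa, hc, mul_one]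
        rw [hc, map_one] at this
        exact this.symm
      have hah : a ≠ h := by
        intro hc
        apply hh
        have h1 : φ a = h := by rw [hc, hfix]
        have h2 : φ a = 1 := by rw [hφa, hc, hsq]
        rw [h2] at h1
        exact h1.symm
      have haO : a ∈ Ofin := by
        rw [hOeq]; simp [ha1, hah]
      obtain ⟨i, _, hi⟩ := Finset.mem_image.mp haO
      have : (⇑φ)^[i] ((⇑φ)^[2] x) = (⇑φ)^[i] x := by
        calc (⇑φ)^[i] ((⇑φ)^[2] x) = (⇑φ)^[i + 2] x := (Function.iterate_add_apply _ i 2 x).symm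
        _ = (⇑φ)^[2 + i] x := by rw [Nat.add_comm]
        _ = (⇑φ)^[2] ((⇑φ)^[i] x) := Function.iterate_add_apply _ 2 i x
        _ = (⇑φ)^[2] a := by rw [hi]
        _ = a := hφ2a
        _ = (⇑φ)^[i] x := hi.symm
      have h2x : (⇑φ)^[2] x = x := hinj i this
      have : k ∣ 2 := Function.IsPeriodicPt.minimalPeriod_dvd h2x
      obtain ⟨c, hc⟩ := this
      rw [hk6'] at hc
      omega
    -- k ≠ 5
    have hknot5 : k ≠ 5 := by
      intro hk5'
      have hdisj : Disjoint ({1, h} : Finset V) Ofin := by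
        rw [Finset.disjoint_left]
        intro g hg hgO
        obtain ⟨n, _, rfl⟩ := Finset.mem_image.mp hgO
        rcases Finset.mem_insert.mp hg with h1 | h2
        · exact hne1 n h1
        · exact hneh n (Finset.mem_singleton.mp h2)
      have hTcard : (({1, h} : Finset V) ∪ Ofin).card = 7 := by
        rw [Finset.card_union_of_disjoint hdisj, hcard2, hcardO, hk5']
      have hCcard : (Finset.univ \ (({1, h} : Finset V) ∪ Ofin)).card = 1 := by
        rw [Finset.card_sdiff_of_subset (Finset.subset_univ _), hTcard, hcardU]
      obtain ⟨m, hmC⟩ := Finset.card_eq_one.mp hCcard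
      have hmm : m ∈ Finset.univ \ (({1, h} : Finset V) ∪ Ofin) := by
        rw [hmC]; exact Finset.mem_singleton_self m
      rw [Finset.mem_sdiff, Finset.mem_union] at hmm
      have hm1 : m ≠ 1 := fun hc => hmm.2 (Or.inl (by simp [hc]))
      have hmh : m ≠ h := fun hc => hmm.2 (Or.inl (by simp [hc]))
      have hmO : m ∉ Ofin := fun hc => hmm.2 (Or.inr hc)
      -- φ fixes m
      have hφm : φ m = m := by
        have hin : φ m ∈ Finset.univ \ (({1, h} : Finset V) ∪ Ofin) := by
          rw [Finset.mem_sdiff, Finset.mem_union]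
          refine ⟨Finset.mem_univ _, ?_⟩
          rintro (hc | hc)
          · rcases Finset.mem_insert.mp hc with h1 | h2
            · exact hm1 (φ.injective (by rw [h1, map_one]))
            · exact hmh (φ.injective (by rw [Finset.mem_singleton.mp h2, hfix]))
          · obtain ⟨n, _, hn⟩ := Finset.mem_image.mp hc
            apply hmO
            have : φ ((⇑φ)^[n + 4] x) = φ m := by
              calc φ ((⇑φ)^[n + 4] x) = (⇑φ)^[n + 5] x :=
                (Function.iterate_succ_apply' (⇑φ) (n + 4) x).symm
              _ = (⇑φ)^[n] ((⇑φ)^[5] x) := Function.iterate_add_apply _ n 5 x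
              _ = (⇑φ)^[n] x := by rw [← hk5', hkx]
              _ = φ m := hn
            have := φ.injective this
            rw [← this]
            exact hmemO (n + 4)
        rw [hmC] at hin
        exact Finset.mem_singleton.mp hin
      -- h * m is also fixed, not 1, not h, not in the orbit
      have hφm' : φ (h * m) = h * m := by rw [map_mul, hfix, hφm]
      have hm'1 : h * m ≠ 1 := fun hc => hmh ((hid h m hc).symm)
      have hm'h : h * m ≠ h := by
        intro hc
        apply hm1
        calc m = h * (h * m) := (hcancel h m).symm
        _ = h * h := by rw [hc]
        _ = 1 := hsq h
      have hm'O : h * m ∉ Ofin := by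
        intro hc
        obtain ⟨n, _, hn⟩ := Finset.mem_image.mp hc
        have : (⇑φ)^[n] (φ x) = (⇑φ)^[n] x := by
          calc (⇑φ)^[n] (φ x) = (⇑φ)^[n + 1] x := (Function.iterate_succ_apply (⇑φ) n x).symm
          _ = φ ((⇑φ)^[n] x) := Function.iterate_succ_apply' (⇑φ) n x
          _ = φ (h * m) := by rw [hn]
          _ = h * m := hφm'
          _ = (⇑φ)^[n] x := hn.symm
        have hφx : φ x = x := hinj n this
        have : k ∣ 1 := Function.IsPeriodicPt.minimalPeriod_dvd
          (show (⇑φ)^[1] x = x by simpa using hφx)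
        have := Nat.dvd_one.mp this
        omega
      -- so h * m is the unique element outside, i.e. equals m
      have : h * m ∈ Finset.univ \ (({1, h} : Finset V) ∪ Ofin) := by
        rw [Finset.mem_sdiff, Finset.mem_union]
        refine ⟨Finset.mem_univ _, ?_⟩
        rintro (hc | hc)
        · rcases Finset.mem_insert.mp hc with h1 | h2
          · exact hm'1 h1
          · exact hm'h (Finset.mem_singleton.mp h2)
        · exact hm'O hc
      rw [hmC, Finset.mem_singleton] at this
      exact hh (hright h m this)
    exact ⟨hrange, hcardO, by omega⟩
  constructor
  · intro x hx1 hxh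
    obtain ⟨hrange, hcardO, hk4⟩ := key x hx1 hxh
    rw [hrange, Set.ncard_coe_finset, hcardO]
    exact hk4
  · rintro ⟨x, hx1, hxh, hall⟩
    obtain ⟨hrange, hcardO, hk4⟩ := key x hx1 hxh
    have hsub : ↑(Finset.univ \ {1, h} : Finset V) ⊆ (Set.range fun n : ℕ => (φ ^ n) x) := by
      intro g hg
      simp only [Finset.coe_sdiff, Finset.coe_univ, Set.mem_diff, Finset.mem_coe,
        Finset.coe_insert, Finset.coe_singleton, Set.mem_insert_iff,
        Set.mem_singleton_iff] at hg
      exact hall g (fun hc => hg.2 (Or.inl hc)) (fun hc => hg.2 (Or.inr hc))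
    have h6 : 6 ≤ (Set.range fun n : ℕ => (φ ^ n) x).ncard := by
      calc (6 : ℕ) = (↑(Finset.univ \ {1, h} : Finset V) : Set V).ncard := by
            rw [Set.ncard_coe_finset, hC6]
      _ ≤ _ := Set.ncard_le_ncard hsub (Set.toFinite _)
    have h4 : (Set.range fun n : ℕ => (φ ^ n) x).ncard ≤ 4 := by
      rw [hrange, Set.ncard_coe_finset, hcardO]; exact hk4
    omega
end

section
/- Let V be a group with exactly 8 elements in which every element g satisfies g * g = 1, let h ∈ V with h ≠ 1, and let φ be a group automorphism of V with φ(h) = h. Suppose O ⊆ V ∖ {1, h} is a φ-orbit of cardinality 4 (i.e., O is the φ-orbit of some element and has exactly 4 elements). Then there exists x ∈ V such that V ∖ ({1, h} ∪ O) = {x, x * h}. -/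
/-!
Right multiplication by `h` commutes with `φ` because `φ` fixes `h`, so it maps the `φ`-orbit `O`
of `y` onto the `φ`-orbit of `y * h`. Both orbits have four elements and lie in the six-element set
`V ∖ {1, h}`, so they meet and therefore coincide. Hence the fixed-point-free involution
`x ↦ x * h` preserves `V ∖ {1, h}` and `O`, so also the two remaining elements, which are
therefore of the form `x, x * h`.
-/

open MulAction Set

theorem MulAction.range_pow_smul_eq_orbit_zpowers {G α : Type*} [Group G] [Finite G]
    [MulAction G α] (g : G) (a : α) :
    range (fun n : ℕ => g ^ n • a) = orbit (Subgroup.zpowers g) a := by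
  have hmem (x : G) : x ∈ Subgroup.zpowers g ↔ ∃ n : ℕ, g ^ n = x := by
    rw [← SetLike.mem_coe, ← powers_eq_zpowers, SetLike.mem_coe, Submonoid.mem_powers_iff]
  ext b
  constructor
  · rintro ⟨n, rfl⟩
    exact ⟨⟨g ^ n, (hmem _).mpr ⟨n, rfl⟩⟩, rfl⟩
  · rintro ⟨⟨x, hx⟩, rfl⟩
    obtain ⟨n, rfl⟩ := (hmem x).mp hx
    exact ⟨n, rfl⟩

theorem MulAction.image_orbit_of_map_smul {M α : Type*} [Monoid M] [MulAction M α] {f : α → α}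
    (hf : ∀ (m : M) (a : α), f (m • a) = m • f a) (a : α) :
    f '' orbit M a = orbit M (f a) := by
  ext b
  simp [mem_orbit_iff, hf]

theorem Set.inter_nonempty_of_ncard_lt_ncard_add_ncard {α : Type*} {s t u : Set α}
    (hs : s ⊆ u) (ht : t ⊆ u) (hu : u.Finite) (hlt : u.ncard < s.ncard + t.ncard) :
    (s ∩ t).Nonempty := by
  rw [← not_disjoint_iff_nonempty_inter]
  intro hst
  rw [← ncard_union_eq hst (hu.subset hs) (hu.subset ht)] at hlt
  exact hlt.not_ge (ncard_le_ncard (union_subset hs ht) hu)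

theorem Set.eq_pair_of_ncard_eq_two {α : Type*} {s : Set α} {a b : α} (hs : s.ncard = 2)
    (ha : a ∈ s) (hb : b ∈ s) (hab : a ≠ b) : s = {a, b} :=
  (eq_of_subset_of_ncard_le (pair_subset ha hb) (by rw [hs, ncard_pair hab])
    (finite_of_ncard_ne_zero (by omega))).symm

theorem image_mul_right_orbit_zpowers {V : Type*} [Group V] {φ : MulAut V} {h : V}
    (hfix : φ h = h) (y : V) :
    (· * h) '' orbit (Subgroup.zpowers φ) y = orbit (Subgroup.zpowers φ) (y * h) := by
  have hstab : Subgroup.zpowers φ ≤ stabilizer (MulAut V) h :=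
    Subgroup.zpowers_le.mpr hfix
  refine image_orbit_of_map_smul (fun ψ a => ?_) y
  have hψ : (ψ : MulAut V) h = h := hstab ψ.2
  simp [Subgroup.smul_def, MulAut.smul_def, hψ]

theorem stmt_13 {V : Type*} [Group V] (hcard : Nat.card V = 8)
    (hsq : ∀ g : V, g * g = 1) (h : V) (hh : h ≠ 1)
    (φ : MulAut V) (hfix : φ h = h)
    (O : Set V) (hOsub : O ⊆ (Set.univ : Set V) \ {1, h})
    (hOorb : ∃ y : V, O = Set.range fun n : ℕ => (φ ^ n) y)
    (hO4 : O.ncard = 4) :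
    ∃ x : V, (Set.univ : Set V) \ ({1, h} ∪ O) = {x, x * h} := by
  have : Finite V := Nat.finite_of_card_ne_zero (by omega)
  obtain ⟨y, rfl⟩ := hOorb
  set O := range fun n : ℕ => (φ ^ n) y
  set T : Set V := univ \ {1, h}
  have hinj : Function.Injective (· * h) := mul_left_injective h
  have hT : (· * h) '' T = T := by
    rw [image_sdiff hinj, image_univ_of_surjective (mul_right_surjective h), image_pair,
      one_mul, hsq, pair_comm]
  have hTcard : T.ncard = 6 := by
    rw [ncard_sdiff (subset_univ _), ncard_univ, hcard, ncard_pair hh.symm]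
  have hOorbit : O = orbit (Subgroup.zpowers φ) y := range_pow_smul_eq_orbit_zpowers φ y
  have hOh : (· * h) '' O = O := by
    have hmeet : ((· * h) '' O ∩ O).Nonempty :=
      inter_nonempty_of_ncard_lt_ncard_add_ncard (hT ▸ image_mono hOsub) hOsub (toFinite T)
        (by rw [ncard_image_of_injective _ hinj, hO4, hTcard]; norm_num)
    rw [hOorbit, image_mul_right_orbit_zpowers hfix] at hmeet ⊢
    exact (orbit.eq_or_disjoint _ _).resolve_right (not_disjoint_iff_nonempty_inter.mpr hmeet)
  have hCh : (· * h) '' (T \ O) = T \ O := by rw [image_sdiff hinj, hT, hOh]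
  have hCcard : (T \ O).ncard = 2 := by rw [ncard_sdiff hOsub, hTcard, hO4]
  obtain ⟨x, hx⟩ := nonempty_of_ncard_ne_zero (hCcard ▸ two_ne_zero)
  refine ⟨x, sdiff_sdiff.symm.trans ?_⟩
  exact eq_pair_of_ncard_eq_two hCcard hx (hCh ▸ mem_image_of_mem _ hx) (by simpa using hh)
end
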